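/- arXiv:0912.5296 — 3 statements merged into one kernel-verified Lean document; each statement's English description precedes it below -/
import Mathlib

section
/- Let μ be a real number with μ ≠ 0 and μ ≠ 1, and let a, b, c : ℝ × ℝ → ℝ be continuous functions of (x, t). Suppose F : ℝ × ℝ → ℝ is continuously differentiable with F > 0, Fₓ(x,t) = μ·a(x,t)·F(x,t) and F_t(x,t) = (μ−1)·b(x,t)·F(x,t), and suppose G : ℝ × ℝ → ℝ is differentiable in x with Gₓ(x,t) = μ·(μ−1)·c(x,t)·F(x,t). Define the Lagrangian L(x, v, t) = F(x,t)·v^μ − G(x,t) (with v^μ = exp(μ·log v) for v > 0). Then a twice differentiable curve x : ℝ → ℝ with x'(t) > 0 for all t satisfies the Euler–Lagrange equation of L if and only if x''(t) + a(x(t),t)·x'(t)² + b(x(t),t)·x'(t) + c(x(t),t)·x'(t)^{2−μ} = 0 for all t ∈ ℝ. (This is the constructive content of the condition (μ−1)·bₓ = μ·a_t.) -/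
/-- Partial derivative of the Lagrangian `L x v t` in the velocity argument. -/
noncomputable def pv (L : ℝ → ℝ → ℝ → ℝ) (x v t : ℝ) : ℝ := deriv (fun w => L x w t) v

/-- Partial derivative of the Lagrangian `L x v t` in the position argument. -/
noncomputable def px (L : ℝ → ℝ → ℝ → ℝ) (x v t : ℝ) : ℝ := deriv (fun y => L y v t) x

/-- A curve `x` satisfies the Euler–Lagrange equation of `L`:
`(d/dt)[(∂L/∂v)(x t, x' t, t)] = (∂L/∂x)(x t, x' t, t)` for all `t`. -/
def SatisfiesEL (L : ℝ → ℝ → ℝ → ℝ) (x : ℝ → ℝ) : Prop :=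
  ∀ t : ℝ, deriv (fun s => pv L (x s) (deriv x s) s) t = px L (x t) (deriv x t) t

/-- Partial derivative of `f (x, t)` in the first argument. -/
noncomputable def pd1 (f : ℝ × ℝ → ℝ) (x t : ℝ) : ℝ := deriv (fun y => f (y, t)) x

/-- Partial derivative of `f (x, t)` in the second argument. -/
noncomputable def pd2 (f : ℝ × ℝ → ℝ) (x t : ℝ) : ℝ := deriv (fun s => f (x, s)) t

/-!
For `v = x' > 0` the momentum is `∂L/∂v = μ F v^(μ-1)`, so by the chain rule its time derivative
is `μ (μ a F v + (μ-1) b F) v^(μ-1) + μ (μ-1) F v^(μ-2) x''`, while `∂L/∂x = μ a F v^μ - μ (μ-1) c F`.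
Their difference is exactly `μ (μ-1) F v^(μ-2)` times the left-hand side of the ODE, and this factor
never vanishes.
-/

open Real

theorem pd1_eq_fderiv {f : ℝ × ℝ → ℝ} {x t : ℝ} (hf : DifferentiableAt ℝ f (x, t)) :
    pd1 f x t = fderiv ℝ f (x, t) (1, 0) :=
  (hf.hasFDerivAt.comp_hasDerivAt x ((hasDerivAt_id x).prodMk (hasDerivAt_const x t))).deriv

theorem pd2_eq_fderiv {f : ℝ × ℝ → ℝ} {x t : ℝ} (hf : DifferentiableAt ℝ f (x, t)) :
    pd2 f x t = fderiv ℝ f (x, t) (0, 1) :=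
  (hf.hasFDerivAt.comp_hasDerivAt t ((hasDerivAt_const t x).prodMk (hasDerivAt_id t))).deriv

theorem hasDerivAt_pd1 {f : ℝ × ℝ → ℝ} {x t : ℝ} (hf : DifferentiableAt ℝ f (x, t)) :
    HasDerivAt (fun y => f (y, t)) (pd1 f x t) x :=
  (hf.comp x (differentiableAt_id.prodMk (differentiableAt_const t))).hasDerivAt

theorem hasDerivAt_comp_graph {f : ℝ × ℝ → ℝ} {x : ℝ → ℝ} {v t : ℝ}
    (hf : DifferentiableAt ℝ f (x t, t)) (hx : HasDerivAt x v t) :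
    HasDerivAt (fun s => f (x s, s)) (pd1 f (x t) t * v + pd2 f (x t) t) t := by
  have hcomp := hf.hasFDerivAt.comp_hasDerivAt_of_eq t (hx.prodMk (hasDerivAt_id t)) rfl
  have hsplit : ((v, 1) : ℝ × ℝ) = v • ((1 : ℝ), (0 : ℝ)) + ((0 : ℝ), (1 : ℝ)) := by simp
  rwa [hsplit, map_add, map_smul, smul_eq_mul, mul_comm, ← pd1_eq_fderiv hf,
    ← pd2_eq_fderiv hf] at hcomp

theorem pv_eq_of_eq_rpow {L : ℝ → ℝ → ℝ → ℝ} {X t A B μ v : ℝ}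
    (hL : ∀ w, 0 < w → L X w t = A * w ^ μ - B) (hv : 0 < v) :
    pv L X v t = A * (μ * v ^ (μ - 1)) := by
  have hloc : (fun w => L X w t) =ᶠ[nhds v] fun w => A * w ^ μ - B := by
    filter_upwards [eventually_gt_nhds hv] with w hw using hL w hw
  rw [pv, hloc.deriv_eq]
  exact (((hasDerivAt_rpow_const (Or.inl hv.ne')).const_mul A).sub_const B).deriv

theorem px_eq_of_eq_rpow {L : ℝ → ℝ → ℝ → ℝ} {f g : ℝ → ℝ} {X v t f' g' μ : ℝ}
    (hL : ∀ y, L y v t = f y * v ^ μ - g y) (hf : HasDerivAt f f' X) (hg : HasDerivAt g g' X) :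
    px L X v t = f' * v ^ μ - g' := by
  rw [px, funext hL]
  exact ((hf.mul_const _).sub hg).deriv

theorem euler_lagrange_sub_eq {μ F a b c v w : ℝ} (hv : 0 < v) :
    ((μ * a * F * v + (μ - 1) * b * F) * (μ * v ^ (μ - 1))
        + F * (μ * ((μ - 1) * v ^ (μ - 1 - 1) * w)))
      - (μ * a * F * v ^ μ - μ * (μ - 1) * c * F)
      = μ * (μ - 1) * F * v ^ (μ - 2) * (w + a * v ^ 2 + b * v + c * v ^ (2 - μ)) := by
  have h1 : v ^ (μ - 1) = v ^ (μ - 2) * v := by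
    rw [← rpow_add_one hv.ne']; ring_nf
  have h2 : v ^ μ = v ^ (μ - 2) * v ^ 2 := by
    rw [← rpow_natCast, ← rpow_add hv]; ring_nf
  have h3 : v ^ (μ - 2) * v ^ (2 - μ) = 1 := by
    rw [← rpow_add hv]; ring_nf; exact rpow_zero v
  rw [show μ - 1 - 1 = μ - 2 by ring, h1, h2]
  linear_combination -μ * (μ - 1) * c * F * h3

theorem monomial_lagrangian_general_general
    (μ : ℝ) (hμ0 : μ ≠ 0) (hμ1 : μ ≠ 1)
    (a b c : ℝ × ℝ → ℝ)
    (F : ℝ × ℝ → ℝ) (hF : ContDiff ℝ 1 F) (hFpos : ∀ x t : ℝ, 0 < F (x, t))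
    (hFx : ∀ x t : ℝ, pd1 F x t = μ * a (x, t) * F (x, t))
    (hFt : ∀ x t : ℝ, pd2 F x t = (μ - 1) * b (x, t) * F (x, t))
    (G : ℝ × ℝ → ℝ)
    (hG : ∀ x t : ℝ, HasDerivAt (fun y => G (y, t)) (μ * (μ - 1) * c (x, t) * F (x, t)) x)
    (L : ℝ → ℝ → ℝ → ℝ)
    (hL : ∀ x t : ℝ, ∀ v : ℝ, 0 < v → L x v t = F (x, t) * v ^ μ - G (x, t))
    (x : ℝ → ℝ) (hx : Differentiable ℝ x) (hx' : Differentiable ℝ (deriv x))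
    (hxpos : ∀ t : ℝ, 0 < deriv x t) :
    SatisfiesEL L x ↔
      ∀ t : ℝ, deriv (deriv x) t + a (x t, t) * (deriv x t) ^ 2
        + b (x t, t) * deriv x t + c (x t, t) * (deriv x t) ^ (2 - μ) = 0 := by
  have hFd : Differentiable ℝ F := hF.differentiable one_ne_zero
  have hmomentum : (fun s => pv L (x s) (deriv x s) s)
      = fun s => F (x s, s) * (μ * deriv x s ^ (μ - 1)) :=
    funext fun s => pv_eq_of_eq_rpow (hL (x s) s) (hxpos s)
  refine forall_congr' fun t => ?_
  have hFcurve := hasDerivAt_comp_graph (hFd (x t, t)) (hx t).hasDerivAt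
  rw [hFx, hFt] at hFcurve
  have hvelocity := (hasDerivAt_rpow_const (p := μ - 1) (Or.inl (hxpos t).ne')).comp t
    (hx' t).hasDerivAt
  have hforce := px_eq_of_eq_rpow (fun y => hL y t _ (hxpos t))
    (hFx (x t) t ▸ hasDerivAt_pd1 (hFd (x t, t))) (hG (x t) t)
  have hdmomentum : HasDerivAt (fun s => F (x s, s) * (μ * deriv x s ^ (μ - 1))) _ t :=
    hFcurve.mul (hvelocity.const_mul μ)
  have hfactor : μ * (μ - 1) * F (x t, t) * deriv x t ^ (μ - 2) ≠ 0 :=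
    mul_ne_zero (mul_ne_zero (mul_ne_zero hμ0 (sub_ne_zero.mpr hμ1)) (hFpos _ _).ne')
      (rpow_pos_of_pos (hxpos t) _).ne'
  rw [hmomentum, hdmomentum.deriv, hforce, ← sub_eq_zero,
    euler_lagrange_sub_eq (hxpos t), mul_eq_zero, or_iff_right hfactor]

theorem monomial_lagrangian_general
    (μ : ℝ) (hμ0 : μ ≠ 0) (hμ1 : μ ≠ 1)
    (a b c : ℝ × ℝ → ℝ) (ha : Continuous a) (hb : Continuous b) (hc : Continuous c)
    (F : ℝ × ℝ → ℝ) (hF : ContDiff ℝ 1 F) (hFpos : ∀ x t : ℝ, 0 < F (x, t))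
    (hFx : ∀ x t : ℝ, pd1 F x t = μ * a (x, t) * F (x, t))
    (hFt : ∀ x t : ℝ, pd2 F x t = (μ - 1) * b (x, t) * F (x, t))
    (G : ℝ × ℝ → ℝ)
    (hG : ∀ x t : ℝ, HasDerivAt (fun y => G (y, t)) (μ * (μ - 1) * c (x, t) * F (x, t)) x)
    (L : ℝ → ℝ → ℝ → ℝ)
    (hL : ∀ x t : ℝ, ∀ v : ℝ, 0 < v → L x v t = F (x, t) * v ^ μ - G (x, t))
    (x : ℝ → ℝ) (hx : Differentiable ℝ x) (hx' : Differentiable ℝ (deriv x))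
    (hxpos : ∀ t : ℝ, 0 < deriv x t) :
    SatisfiesEL L x ↔
      ∀ t : ℝ, deriv (deriv x) t + a (x t, t) * (deriv x t) ^ 2
        + b (x t, t) * deriv x t + c (x t, t) * (deriv x t) ^ (2 - μ) = 0 :=
  monomial_lagrangian_general_general μ hμ0 hμ1 a b c F hF hFpos hFx hFt G hG L hL x hx hx' hxpos
end

section
/- Let k, C, n be real numbers with C ≠ 0, n ≠ 0 and n ≠ 1, and define the Lagrangian L(x, v, t) = C·v^n·e^{n·k·x} (with v^n = exp(n·log v) for v > 0). Then a twice differentiable curve x : ℝ → ℝ with x'(t) > 0 for all t satisfies the Euler–Lagrange equation of L if and only if x''(t) + k·x'(t)² = 0 for all t ∈ ℝ. In particular, the equation ẍ + kẋ² = 0 admits a one-parameter family of different Lagrangians. -/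
/-!
On velocities `v > 0` the partial derivatives are `∂L/∂v = C n v^(n-1) e^(nkx)` and
`∂L/∂x = C n k v^n e^(nkx)`. Differentiating the first along the curve, the Euler–Lagrange
residual `(d/dt) ∂L/∂v - ∂L/∂x` equals `C n (n-1) ẋ^(n-2) e^(nkx) (ẍ + k ẋ²)`, and the prefactor
vanishes nowhere when `C n (n-1) ≠ 0` and `ẋ > 0`.
-/

open Real

section PowerExpLagrangian

variable {k C n : ℝ} {L : ℝ → ℝ → ℝ → ℝ}

theorem pv_eq_of_pos (hL : ∀ x t v : ℝ, 0 < v → L x v t = C * v ^ n * exp (n * k * x))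
    {a v : ℝ} (t : ℝ) (hv : 0 < v) :
    pv L a v t = C * n * v ^ (n - 1) * exp (n * k * a) := by
  have hloc : (fun w => L a w t) =ᶠ[nhds v] fun w => C * w ^ n * exp (n * k * a) := by
    filter_upwards [Ioi_mem_nhds hv] with w hw using hL a t w hw
  have hderiv : HasDerivAt (fun w => C * w ^ n * exp (n * k * a))
      (C * (n * v ^ (n - 1)) * exp (n * k * a)) v :=
    ((hasDerivAt_rpow_const (Or.inl hv.ne')).const_mul C).mul_const _
  rw [pv, hloc.deriv_eq, hderiv.deriv]
  ring

theorem px_eq_of_pos (hL : ∀ x t v : ℝ, 0 < v → L x v t = C * v ^ n * exp (n * k * x))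
    {a v : ℝ} (t : ℝ) (hv : 0 < v) :
    px L a v t = C * n * k * v ^ n * exp (n * k * a) := by
  have hderiv : HasDerivAt (fun y => C * v ^ n * exp (n * k * y))
      (C * v ^ n * (exp (n * k * a) * (n * k))) a := by
    simpa using (((hasDerivAt_id a).const_mul (n * k)).exp).const_mul (C * v ^ n)
  rw [px, funext fun y => hL y t v hv, hderiv.deriv]
  ring

theorem hasDerivAt_momentum {x : ℝ → ℝ} {t : ℝ} (hx : DifferentiableAt ℝ x t)
    (hx' : DifferentiableAt ℝ (deriv x) t) (hv : 0 < deriv x t) :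
    HasDerivAt (fun s => C * n * deriv x s ^ (n - 1) * exp (n * k * x s))
      (C * n * ((n - 1) * deriv x t ^ (n - 1 - 1) * deriv (deriv x) t) * exp (n * k * x t)
        + C * n * deriv x t ^ (n - 1) * (exp (n * k * x t) * (n * k * deriv x t))) t := by
  have hvel : HasDerivAt (fun s => deriv x s ^ (n - 1))
      ((n - 1) * deriv x t ^ (n - 1 - 1) * deriv (deriv x) t) t := by
    simpa [mul_assoc, Function.comp_def] using
      (hasDerivAt_rpow_const (p := n - 1) (Or.inl hv.ne')).comp t hx'.hasDerivAt
  have hexp : HasDerivAt (fun s => exp (n * k * x s)) (exp (n * k * x t) * (n * k * deriv x t)) t :=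
    (hx.hasDerivAt.const_mul (n * k)).exp
  exact (hvel.const_mul (C * n)).mul hexp

theorem euler_lagrange_residual_eq
    (hL : ∀ x t v : ℝ, 0 < v → L x v t = C * v ^ n * exp (n * k * x))
    {x : ℝ → ℝ} {t : ℝ} (hxpos : ∀ s, 0 < deriv x s) (hx : DifferentiableAt ℝ x t)
    (hx' : DifferentiableAt ℝ (deriv x) t) :
    deriv (fun s => pv L (x s) (deriv x s) s) t - px L (x t) (deriv x t) t
      = C * n * (n - 1) * deriv x t ^ (n - 2) * exp (n * k * x t)
        * (deriv (deriv x) t + k * deriv x t ^ 2) := by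
  have hv := hxpos t
  have hmomentum : (fun s => pv L (x s) (deriv x s) s)
      = fun s => C * n * deriv x s ^ (n - 1) * exp (n * k * x s) :=
    funext fun s => pv_eq_of_pos hL s (hxpos s)
  rw [hmomentum, (hasDerivAt_momentum hx hx' hv).deriv, px_eq_of_pos hL t hv]
  have hpow_pred : deriv x t ^ (n - 1) = deriv x t ^ (n - 2) * deriv x t := by
    rw [← rpow_add_one hv.ne']
    ring_nf
  have hpow : deriv x t ^ n = deriv x t ^ (n - 2) * deriv x t ^ 2 := by
    rw [← rpow_natCast, ← rpow_add hv]
    norm_num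
  rw [show n - 1 - 1 = n - 2 by ring, hpow_pred, hpow]
  ring

end PowerExpLagrangian

theorem one_parameter_family_for_quadratic_friction
    (k C n : ℝ) (hC : C ≠ 0) (hn0 : n ≠ 0) (hn1 : n ≠ 1)
    (L : ℝ → ℝ → ℝ → ℝ)
    (hL : ∀ x t : ℝ, ∀ v : ℝ, 0 < v → L x v t = C * v ^ n * Real.exp (n * k * x))
    (x : ℝ → ℝ) (hx : Differentiable ℝ x) (hx' : Differentiable ℝ (deriv x))
    (hxpos : ∀ t : ℝ, 0 < deriv x t) :
    SatisfiesEL L x ↔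
      ∀ t : ℝ, deriv (deriv x) t + k * (deriv x t) ^ 2 = 0 := by
  refine forall_congr' fun t => ?_
  have hfactor : C * n * (n - 1) * deriv x t ^ (n - 2) * exp (n * k * x t) ≠ 0 := by
    have := sub_ne_zero.mpr hn1
    have := (rpow_pos_of_pos (hxpos t) (n - 2)).ne'
    positivity
  rw [← sub_eq_zero, euler_lagrange_residual_eq hL hxpos (hx t) (hx' t), mul_eq_zero,
    or_iff_right hfactor]
end

section
/- Let a, b : ℝ → ℝ be continuous, define M(t) = exp(∫₀ᵗ a(τ) dτ) and N(t) = ∫₀ᵗ b(τ)/M(τ) dτ, and let F : ℝ → ℝ be twice differentiable with F''(ξ) ≠ 0 for all ξ. Define the Lagrangian L(x, v, t) = M(t)·F(v/M(t) − N(t)). Then a twice differentiable curve x : ℝ → ℝ satisfies the Euler–Lagrange equation of L if and only if x''(t) = a(t)·x'(t) + b(t) for all t ∈ ℝ. In particular, the equation ẍ = a(t)ẋ + b(t) admits infinitely many Lagrangian formulations, one for each such F. -/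
/-!
The Lagrangian does not depend on `x`, so the Euler–Lagrange equation says that
`∂L/∂v = F'(ξ)` is constant along the curve, where `ξ = x'/M - N`. Since `M' = a M` and
`N' = b / M`, the integrating factor gives `ξ' = (x'' - a x' - b) / M`, so the equation reads
`F''(ξ) · (x'' - a x' - b) / M = 0`, and `F'' ≠ 0` leaves exactly `x'' = a x' + b`.
-/

theorem hasDerivAt_exp_integral {a : ℝ → ℝ} (ha : Continuous a) (t : ℝ) :
    HasDerivAt (fun t => Real.exp (∫ τ in (0:ℝ)..t, a τ))
      (a t * Real.exp (∫ τ in (0:ℝ)..t, a τ)) t := by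
  simpa only [mul_comm] using (ha.integral_hasStrictDerivAt 0 t).hasDerivAt.exp

section Lagrangian

variable {M N F : ℝ → ℝ}

theorem px_mul_comp_div_sub (X v t : ℝ) :
    px (fun _ v t => M t * F (v / M t - N t)) X v t = 0 :=
  deriv_const X _

theorem pv_mul_comp_div_sub {X v t : ℝ} (hM : M t ≠ 0)
    (hF : DifferentiableAt ℝ F (v / M t - N t)) :
    pv (fun _ v t => M t * F (v / M t - N t)) X v t = deriv F (v / M t - N t) := by
  have hξ : HasDerivAt (fun w => w / M t - N t) (1 / M t) v :=
    ((hasDerivAt_id v).div_const (M t)).sub_const (N t)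
  refine ((hF.hasDerivAt.comp v hξ).const_mul (M t)).deriv.trans ?_
  field_simp

theorem hasDerivAt_div_sub_of_integratingFactor {a b u : ℝ → ℝ} {u' t : ℝ}
    (hu : HasDerivAt u u' t) (hM : HasDerivAt M (a t * M t) t) (hM0 : M t ≠ 0)
    (hN : HasDerivAt N (b t / M t) t) :
    HasDerivAt (fun s => u s / M s - N s) ((u' - a t * u t - b t) / M t) t := by
  refine ((hu.div hM hM0).sub hN).congr_deriv ?_
  field_simp

theorem satisfiesEL_mul_comp_div_sub_iff {a b x : ℝ → ℝ}
    (hM : ∀ t, HasDerivAt M (a t * M t) t) (hM0 : ∀ t, M t ≠ 0)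
    (hN : ∀ t, HasDerivAt N (b t / M t) t)
    (hF : Differentiable ℝ F) (hF' : Differentiable ℝ (deriv F))
    (hF'' : ∀ ξ, deriv (deriv F) ξ ≠ 0) (hx' : Differentiable ℝ (deriv x)) :
    SatisfiesEL (fun _ v t => M t * F (v / M t - N t)) x ↔
      ∀ t, deriv (deriv x) t = a t * deriv x t + b t := by
  set ξ : ℝ → ℝ := fun s => deriv x s / M s - N s
  have hpv : (fun s => pv (fun _ v t => M t * F (v / M t - N t)) (x s) (deriv x s) s)
      = fun s => deriv F (ξ s) :=
    funext fun s => pv_mul_comp_div_sub (hM0 s) (hF _)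
  have hpv_deriv : ∀ t, deriv (fun s => deriv F (ξ s)) t
      = deriv (deriv F) (ξ t) * ((deriv (deriv x) t - a t * deriv x t - b t) / M t) := fun t =>
    ((hF' (ξ t)).hasDerivAt.comp t
      (hasDerivAt_div_sub_of_integratingFactor (hx' t).hasDerivAt (hM t) (hM0 t) (hN t))).deriv
  simp only [SatisfiesEL, hpv, hpv_deriv, px_mul_comp_div_sub, mul_eq_zero, div_eq_zero_iff, hF'',
    hM0, false_or, or_false, sub_sub, sub_eq_zero]

end Lagrangian

theorem family_of_lagrangians_for_linear_equation_general
    (a b : ℝ → ℝ) (ha : Continuous a) (hb : Continuous b)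
    (M N : ℝ → ℝ)
    (hM : ∀ t : ℝ, M t = Real.exp (∫ τ in (0:ℝ)..t, a τ))
    (hN : ∀ t : ℝ, N t = ∫ τ in (0:ℝ)..t, b τ / M τ)
    (F : ℝ → ℝ) (hF : Differentiable ℝ F) (hF' : Differentiable ℝ (deriv F))
    (hF'' : ∀ ξ : ℝ, deriv (deriv F) ξ ≠ 0)
    (L : ℝ → ℝ → ℝ → ℝ)
    (hL : ∀ x v t : ℝ, L x v t = M t * F (v / M t - N t))
    (x : ℝ → ℝ) (hx' : Differentiable ℝ (deriv x)) :
    SatisfiesEL L x ↔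
      ∀ t : ℝ, deriv (deriv x) t = a t * deriv x t + b t := by
  obtain rfl : L = _ := funext₃ hL
  obtain rfl : N = _ := funext hN
  obtain rfl : M = _ := funext hM
  have hMd := hasDerivAt_exp_integral ha
  have hM0 : ∀ t, Real.exp (∫ τ in (0:ℝ)..t, a τ) ≠ 0 := fun t => (Real.exp_pos _).ne'
  have hMc : Continuous fun t => Real.exp (∫ τ in (0:ℝ)..t, a τ) :=
    continuous_iff_continuousAt.2 fun t => (hMd t).continuousAt
  exact satisfiesEL_mul_comp_div_sub_iff hMd hM0
    (fun t => ((hb.div hMc hM0).integral_hasStrictDerivAt 0 t).hasDerivAt) hF hF' hF'' hx'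

theorem family_of_lagrangians_for_linear_equation
    (a b : ℝ → ℝ) (ha : Continuous a) (hb : Continuous b)
    (M N : ℝ → ℝ)
    (hM : ∀ t : ℝ, M t = Real.exp (∫ τ in (0:ℝ)..t, a τ))
    (hN : ∀ t : ℝ, N t = ∫ τ in (0:ℝ)..t, b τ / M τ)
    (F : ℝ → ℝ) (hF : Differentiable ℝ F) (hF' : Differentiable ℝ (deriv F))
    (hF'' : ∀ ξ : ℝ, deriv (deriv F) ξ ≠ 0)
    (L : ℝ → ℝ → ℝ → ℝ)
    (hL : ∀ x v t : ℝ, L x v t = M t * F (v / M t - N t))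
    (x : ℝ → ℝ) (hx : Differentiable ℝ x) (hx' : Differentiable ℝ (deriv x)) :
    SatisfiesEL L x ↔
      ∀ t : ℝ, deriv (deriv x) t = a t * deriv x t + b t :=
  family_of_lagrangians_for_linear_equation_general a b ha hb M N hM hN F hF hF' hF'' L hL x hx'
end
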